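/- Inscribed polygon setup with n odd: let n ≥ 3 be odd, o : E, ρ > 0, and let α : Fin n → ℝ be strictly increasing with α (n−1) − α 0 < 2π; define vertices v : ZMod n → E by v k = o + ρ • (Real.cos (α k̄), Real.sin (α k̄)), where k̄ is the canonical representative of k. Fix i : ZMod n and let L_i be the affine span of {o, v i} (the line through the center o and the vertex v i). Then the reflection across L_i maps the vertex set onto itself, (EuclideanGeometry.reflection L_i) '' Set.range v = Set.range v, if and only if dist (v i) (v (i + k)) = dist (v i) (v (i − k)) for every k : ZMod n. -/

import Mathlib

/-!
Seen from the vertex `v i` at angle `θ`, the vertex `v (i + j)` sits at angle `θ + ψ j`, where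
`0 = ψ 0 < ψ 1 < ⋯ < ψ n = 2π`. Reflection in the line through `o` and `v i` sends angle `θ + t`
to `θ - t`, so it preserves the vertex set iff the values of `ψ` are closed under `t ↦ 2π - t`
modulo `2π`. As `t ↦ 2π - t` reverses order, this means exactly `ψ (n - j) = 2π - ψ j` for all
`j`. The distances from `v i` to `v (i + j)` and `v (i - j)` are determined by `cos (ψ j)` and
`cos (ψ (n - j))`, so symmetry gives equal distances. Conversely, equal cosines force
`ψ (n - j) = ± ψ j` modulo `2π`, and the sign `+` would give `ψ (n - j) = ψ j`, i.e. `n = 2 j`,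
which is impossible for odd `n`.
-/

noncomputable abbrev E : Type := EuclideanSpace ℝ (Fin 2)

open Real
open scoped InnerProductSpace

noncomputable def unitVec (t : ℝ) : E := (WithLp.equiv 2 (Fin 2 → ℝ)).symm ![cos t, sin t]

lemma inner_unitVec (s t : ℝ) : ⟪unitVec s, unitVec t⟫_ℝ = cos (s - t) := by
  simp [unitVec, PiLp.inner_apply, Fin.sum_univ_two, cos_sub, mul_comm]

lemma norm_unitVec (t : ℝ) : ‖unitVec t‖ = 1 := by
  rw [norm_eq_sqrt_real_inner, inner_unitVec, sub_self, cos_zero, sqrt_one]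

lemma unitVec_eq_unitVec_iff {s t : ℝ} : unitVec s = unitVec t ↔ (s : Angle) = t := by
  refine ⟨fun h => Angle.cos_sin_inj ?_ ?_, fun h => ?_⟩
  · exact congrFun (congrArg (WithLp.equiv 2 (Fin 2 → ℝ)) h) 0
  · exact congrFun (congrArg (WithLp.equiv 2 (Fin 2 → ℝ)) h) 1
  · simp only [unitVec, ← Angle.cos_coe, ← Angle.sin_coe, h]

lemma two_mul_cos_smul_unitVec_sub (θ t : ℝ) :
    (2 * cos (θ - t)) • unitVec θ - unitVec t = unitVec (2 * θ - t) := by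
  obtain ⟨d, rfl⟩ : ∃ d, t = θ - d := ⟨θ - t, by ring⟩
  rw [sub_sub_cancel, show 2 * θ - (θ - d) = θ + d by ring]
  ext j
  fin_cases j <;>
    simp only [unitVec, WithLp.equiv_symm_apply, PiLp.sub_apply, PiLp.smul_apply, smul_eq_mul,
      Fin.zero_eta, Fin.mk_one, Fin.isValue, Matrix.cons_val_zero, Matrix.cons_val_one,
      Matrix.cons_val_fin_one, cos_add, sin_add, cos_sub, sin_sub] <;>
    ring

lemma dist_add_smul_unitVec_sq (o : E) (ρ s t : ℝ) :
    dist (o + ρ • unitVec s) (o + ρ • unitVec t) ^ 2 = 2 * ρ ^ 2 * (1 - cos (s - t)) := by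
  rw [dist_add_left, dist_eq_norm, ← smul_sub, norm_smul, mul_pow, norm_eq_abs, sq_abs,
    ← real_inner_self_eq_norm_sq, inner_sub_sub_self]
  simp only [inner_unitVec, sub_self, cos_zero, ← neg_sub s t, cos_neg]
  ring

lemma dist_add_smul_unitVec_eq_iff (o : E) {ρ : ℝ} (hρ : ρ ≠ 0) (s t s' t' : ℝ) :
    dist (o + ρ • unitVec s) (o + ρ • unitVec t) = dist (o + ρ • unitVec s') (o + ρ • unitVec t') ↔
      cos (s - t) = cos (s' - t') := by
  rw [← sq_eq_sq₀ dist_nonneg dist_nonneg, dist_add_smul_unitVec_sq, dist_add_smul_unitVec_sq,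
    mul_right_inj' (by positivity), sub_right_inj]

lemma reflection_add_smul_unitVec (o : E) {ρ : ℝ} (hρ : ρ ≠ 0) (θ t : ℝ) :
    EuclideanGeometry.reflection (affineSpan ℝ {o, o + ρ • unitVec θ}) (o + ρ • unitVec t) =
      o + ρ • unitVec (2 * θ - t) := by
  have hdir : (affineSpan ℝ {o, o + ρ • unitVec θ}).direction = ℝ ∙ unitVec θ := by
    rw [direction_affineSpan, vectorSpan_pair, vsub_eq_sub, sub_add_cancel_left, ← neg_smul,
      Submodule.span_singleton_smul_eq (isUnit_iff_ne_zero.2 (neg_ne_zero.2 hρ))]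
  rw [EuclideanGeometry.reflection_apply_of_mem _ _ (left_mem_affineSpan_pair ℝ _ _),
    vsub_eq_sub, add_sub_cancel_left, vadd_eq_add, add_comm]
  congr 1
  simp only [hdir]
  rw [Submodule.reflection_singleton_apply, norm_unitVec, real_inner_smul_right, inner_unitVec,
    ← two_mul_cos_smul_unitVec_sub]
  module

theorem StrictMono.apply_rev_eq_sub {β : Type*} [AddCommGroup β] [LinearOrder β]
    [IsOrderedAddMonoid β] {m : ℕ} {f : Fin m → β} (hf : StrictMono f) {c : β}
    (h : ∀ j, ∃ k, f k = c - f j) (j : Fin m) : f j.rev = c - f j := by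
  choose σ hσ using fun j : Fin m => h j.rev
  have hσ_mono : StrictMono σ := fun a b hab => by
    rw [← hf.lt_iff_lt, hσ, hσ, sub_lt_sub_iff_left]
    exact hf (Fin.rev_lt_rev.2 hab)
  simpa [hσ_mono.apply_eq] using hσ j.rev

lemma eq_or_of_coe_angle_eq {x y : ℝ} (hx : x ∈ Set.Icc 0 (2 * π)) (hy : y ∈ Set.Icc 0 (2 * π))
    (h : (x : Angle) = y) : x = y ∨ x = 0 ∧ y = 2 * π ∨ x = 2 * π ∧ y = 0 := by
  obtain ⟨k, hk⟩ := Angle.angle_eq_iff_two_pi_dvd_sub.1 h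
  obtain ⟨hx0, hx1⟩ := hx
  obtain ⟨hy0, hy1⟩ := hy
  have hk1 : (k : ℝ) ≤ 1 := by nlinarith [pi_pos]
  have hk2 : -1 ≤ (k : ℝ) := by nlinarith [pi_pos]
  obtain rfl | rfl | rfl : k = -1 ∨ k = 0 ∨ k = 1 := by
    have : k ≤ 1 := by exact_mod_cast hk1
    have : -1 ≤ k := by exact_mod_cast hk2
    omega
  · right; left; constructor <;> push_cast at hk <;> linarith
  · left; push_cast at hk; linarith
  · right; right; constructor <;> push_cast at hk <;> linarith

section AngleWindow

variable {m : ℕ} {ψ : Fin (m + 1) → ℝ}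

lemma mem_Icc_of_window (hψ : StrictMono ψ) (h0 : ψ 0 = 0) (hlast : ψ (Fin.last m) = 2 * π)
    (j : Fin (m + 1)) : ψ j ∈ Set.Icc 0 (2 * π) :=
  ⟨h0 ▸ hψ.monotone (Fin.zero_le j), hlast ▸ hψ.monotone (Fin.le_last j)⟩

lemma apply_rev_eq_two_pi_sub (hψ : StrictMono ψ) (h0 : ψ 0 = 0)
    (hlast : ψ (Fin.last m) = 2 * π) (h : ∀ j, ∃ k, (ψ k : Angle) = -(ψ j : Angle))
    (j : Fin (m + 1)) : ψ j.rev = 2 * π - ψ j := by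
  refine hψ.apply_rev_eq_sub (fun j => ?_) j
  obtain ⟨k, hk⟩ := h j
  have hj := mem_Icc_of_window hψ h0 hlast j
  have hk' : (ψ k : Angle) = (2 * π - ψ j : ℝ) := by
    rw [hk, Angle.coe_sub, Angle.coe_two_pi, zero_sub]
  rcases eq_or_of_coe_angle_eq (mem_Icc_of_window hψ h0 hlast k)
    ⟨by linarith [hj.2], by linarith [hj.1]⟩ hk' with e | ⟨-, e⟩ | ⟨-, e⟩
  · exact ⟨k, e⟩
  · exact ⟨Fin.last m, by rw [hlast, e]⟩
  · exact ⟨0, by rw [h0, e]⟩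

lemma exists_coe_eq_neg_of_cos_eq (hodd : Odd m) (hψ : StrictMono ψ) (h0 : ψ 0 = 0)
    (hlast : ψ (Fin.last m) = 2 * π) (h : ∀ j, cos (ψ j) = cos (ψ j.rev)) (j : Fin (m + 1)) :
    ∃ k, (ψ k : Angle) = -(ψ j : Angle) := by
  rcases Angle.cos_eq_iff_coe_eq_or_eq_neg.1 (h j).symm with h' | h'
  · rcases eq_or_of_coe_angle_eq (mem_Icc_of_window hψ h0 hlast j.rev)
      (mem_Icc_of_window hψ h0 hlast j) h' with e | ⟨-, e⟩ | ⟨-, e⟩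
    · have hsum := Fin.rev_add_cast j
      rw [hψ.injective e] at hsum
      obtain ⟨c, rfl⟩ := hodd
      omega
    · exact ⟨j, by rw [e, Angle.coe_two_pi, neg_zero]⟩
    · exact ⟨j, by rw [e, Angle.coe_zero, neg_zero]⟩
  · exact ⟨j.rev, h'⟩

end AngleWindow

lemma reflection_image_range_eq_iff {ι : Type*} (o : E) {ρ : ℝ} (hρ : ρ ≠ 0) (θ : ℝ)
    (ψ : ι → ℝ) :
    EuclideanGeometry.reflection (affineSpan ℝ {o, o + ρ • unitVec θ}) ''
        Set.range (fun j => o + ρ • unitVec (θ + ψ j)) =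
        Set.range (fun j => o + ρ • unitVec (θ + ψ j)) ↔
      ∀ j, ∃ k, (ψ k : Angle) = -(ψ j : Angle) := by
  set R := EuclideanGeometry.reflection (affineSpan ℝ {o, o + ρ • unitVec θ})
  set S := Set.range (fun j => o + ρ • unitVec (θ + ψ j))
  have hR (j : ι) : R (o + ρ • unitVec (θ + ψ j)) = o + ρ • unitVec (θ - ψ j) := by
    rw [reflection_add_smul_unitVec o hρ, two_mul, add_sub_add_left_eq_sub]
  have hsubset : R '' S = S ↔ R '' S ⊆ S := ⟨le_of_eq, fun h => h.antisymm fun x hx =>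
    ⟨R x, h ⟨x, hx, rfl⟩, EuclideanGeometry.reflection_reflection _ x⟩⟩
  rw [hsubset, ← Set.range_comp, Set.range_subset_iff]
  refine forall_congr' fun j => exists_congr fun k => ?_
  rw [Function.comp_apply, hR, add_right_inj, (smul_right_injective E hρ).eq_iff,
    unitVec_eq_unitVec_iff, Angle.coe_add, Angle.coe_sub, sub_eq_add_neg, add_right_inj]

section PeriodicExtension

variable {n : ℕ} [NeZero n]

/-- The angle of vertex `m mod n`, lifted so that it increases with `m`, by one full turn every
`n` steps. -/
noncomputable def periodicExtension (α : Fin n → ℝ) (m : ℕ) : ℝ :=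
  α (Fin.ofNat n m) + 2 * π * ((m / n : ℕ) : ℝ)

lemma periodicExtension_add_self (α : Fin n → ℝ) (m : ℕ) :
    periodicExtension α (m + n) = periodicExtension α m + 2 * π := by
  have hmod : Fin.ofNat n (m + n) = Fin.ofNat n m := Fin.ext (by simp)
  rw [periodicExtension, periodicExtension, hmod, Nat.add_div_right m (NeZero.pos n)]
  push_cast
  ring

lemma unitVec_periodicExtension (α : Fin n → ℝ) (m : ℕ) :
    unitVec (periodicExtension α m) = unitVec (α (Fin.ofNat n m)) :=
  unitVec_eq_unitVec_iff.2 <| Angle.angle_eq_iff_two_pi_dvd_sub.2 ⟨((m / n : ℕ) : ℤ), by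
    rw [periodicExtension, add_sub_cancel_left, Int.cast_natCast]⟩

lemma strictMono_periodicExtension {α : Fin n → ℝ} (hα : StrictMono α)
    (hspan : ∀ j k, α j < α k + 2 * π) : StrictMono (periodicExtension α) := by
  intro a b hab
  unfold periodicExtension
  rcases (Nat.div_le_div_right (c := n) hab.le).lt_or_eq with hq | hq
  · have : ((a / n : ℕ) : ℝ) + 1 ≤ (b / n : ℕ) := by exact_mod_cast hq
    nlinarith [hspan (Fin.ofNat n a) (Fin.ofNat n b), pi_pos]
  · rw [hq, add_lt_add_iff_right]
    apply hα
    have ha := Nat.mod_add_div a n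
    have hb := Nat.mod_add_div b n
    rw [hq] at ha
    rw [Fin.lt_def, Fin.val_ofNat, Fin.val_ofNat]
    omega

/-- The window has `n + 1` entries, vertex `i` appearing at both ends, so that `Fin.rev`
realises `j ↦ -j` on `ZMod n`. -/
lemma exists_angle_window {α : Fin n → ℝ} (hα : StrictMono α) (hspan : ∀ j k, α j < α k + 2 * π)
    {o : E} {ρ : ℝ} {v : ZMod n → E} (hv : ∀ k : Fin n, v (k : ℕ) = o + ρ • unitVec (α k))
    (i : ZMod n) :
    ∃ θ : ℝ, ∃ ψ : Fin (n + 1) → ℝ, StrictMono ψ ∧ ψ 0 = 0 ∧ ψ (Fin.last n) = 2 * π ∧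
      ∀ j : Fin (n + 1), v (i + (j : ℕ)) = o + ρ • unitVec (θ + ψ j) := by
  set A := periodicExtension α
  have hA := strictMono_periodicExtension hα hspan
  refine ⟨A i.val, fun j => A (i.val + j) - A i.val, fun a b hab => ?_, by simp, ?_, fun j => ?_⟩
  · exact sub_lt_sub_right (hA (Nat.add_lt_add_left hab _)) _
  · simp [A, periodicExtension_add_self]
  · have hvA (x : ℕ) : v x = o + ρ • unitVec (A x) := by
      simpa [A, unitVec_periodicExtension] using hv (Fin.ofNat n x)
    rw [add_sub_cancel, ← hvA, Nat.cast_add, ZMod.natCast_zmod_val]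

end PeriodicExtension

lemma ZMod.natCast_rev {n : ℕ} (j : Fin (n + 1)) : ((j.rev : ℕ) : ZMod n) = -((j : ℕ) : ZMod n) :=
  eq_neg_of_add_eq_zero_left <| by rw [← Nat.cast_add, Fin.rev_add_cast, ZMod.natCast_self]

/-- For an inscribed polygon with an odd number of vertices, the line through the center
`o` and a vertex `v i` is a line of straight symmetry of the polygon if and only if the
clockwise and anticlockwise tuples of distances from `v i` agree. -/
theorem reflection_through_vertex_iff_distances_agree
    (n : ℕ) (hn : 3 ≤ n) (hodd : Odd n) (o : E) (ρ : ℝ) (hρ : 0 < ρ)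
    (α : Fin n → ℝ) (hα : StrictMono α)
    (hspan : α ⟨n - 1, by omega⟩ - α ⟨0, by omega⟩ < 2 * Real.pi)
    (v : ZMod n → E)
    (hv : ∀ k : Fin n, v ((k : ℕ) : ZMod n) =
      o + ρ • (WithLp.equiv 2 (Fin 2 → ℝ)).symm ![Real.cos (α k), Real.sin (α k)])
    (i : ZMod n) :
    (EuclideanGeometry.reflection (affineSpan ℝ {o, v i})) '' Set.range v = Set.range v ↔
      ∀ k : ZMod n, dist (v i) (v (i + k)) = dist (v i) (v (i - k)) := by
  have : NeZero n := ⟨by omega⟩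
  have hwithin (j k : Fin n) : α j < α k + 2 * π := by
    have := hα.monotone (show j ≤ ⟨n - 1, by omega⟩ from Fin.le_def.2 (Nat.le_sub_one_of_lt j.2))
    have := hα.monotone (show ⟨0, by omega⟩ ≤ k from Fin.le_def.2 (Nat.zero_le _))
    linarith
  obtain ⟨θ, ψ, hψ, hψ0, hψlast, hvψ⟩ := exists_angle_window hα hwithin hv i
  have hvi : v i = o + ρ • unitVec θ := by simpa [hψ0] using hvψ 0
  have hrange : Set.range v = Set.range fun j => o + ρ • unitVec (θ + ψ j) := by
    refine Set.Subset.antisymm ?_ (Set.range_subset_iff.2 fun j => ⟨_, hvψ j⟩)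
    rintro _ ⟨m, rfl⟩
    refine ⟨⟨(m - i).val, by have := (m - i).val_lt; omega⟩, ?_⟩
    simp [← hvψ]
  have hdist (j : Fin (n + 1)) : dist (o + ρ • unitVec θ) (v (i + (j : ℕ))) =
      dist (o + ρ • unitVec θ) (v (i - (j : ℕ))) ↔ cos (ψ j) = cos (ψ j.rev) := by
    rw [sub_eq_add_neg, ← ZMod.natCast_rev, hvψ, hvψ, dist_add_smul_unitVec_eq_iff o hρ.ne']
    simp
  rw [hrange, hvi, reflection_image_range_eq_iff o hρ.ne']
  constructor
  · intro h k
    obtain ⟨j, rfl⟩ : ∃ j : Fin (n + 1), ((j : ℕ) : ZMod n) = k :=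
      ⟨⟨k.val, by have := k.val_lt; omega⟩, ZMod.natCast_zmod_val k⟩
    rw [hdist, apply_rev_eq_two_pi_sub hψ hψ0 hψlast h, cos_two_pi_sub]
  · exact fun h => exists_coe_eq_neg_of_cos_eq hodd hψ hψ0 hψlast fun j => (hdist j).1 (h _)
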